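/- Suppose the ℓ-th submodule M_ℓ contains a generating set of cont(L) as a left ideal, i.e., cont(L) = R[x][∂]·M_ℓ. Let G be a reduced Gröbner basis of the ℓ-th coefficient ideal I_ℓ ⊆ R[x], let f ∈ G have lowest x-degree, and let F ∈ cont(L) with deg_∂(F) = ℓ and lc_∂(F) = f. Then F is a completely desingularized operator for L: F is desingularized and the content of f in R divides the content of the leading coefficient of every desingularized operator for L. -/

import Mathlib

open Polynomial

noncomputable section

/-- `Q_R(x)`, the field of rational functions over the fraction field `Q_R` of `R`,
realized as the fraction field of `R[x]`. -/
abbrev QX (R : Type) [CommRing R] [IsDomain R] := FractionRing (Polynomial R)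

/-- Data of an Ore algebra `R[x][∂; σ, δ] ⊆ Q_R(x)[∂; σ, δ]`.
The ring `A` plays the role of `Q_R(x)[∂]`; `ι` embeds the coefficient field,
`D` is the Ore variable `∂`, subject to the commutation rule `∂·p = σ(p)·∂ + δ(p)`,
and every element of `A` has a unique finite coefficient expansion `Σ ι(cᵢ)·∂^i`. -/
structure OreAlg (R : Type) [CommRing R] [IsDomain R] (A : Type) [Ring A] where
  σ : Polynomial R ≃+* Polynomial R
  σ_fix : ∀ r : R, σ (C r) = C r
  δ : Polynomial R → Polynomial R
  δ_add : ∀ f g, δ (f + g) = δ f + δ g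
  δ_linear : ∀ (r : R) (f), δ (C r * f) = C r * δ f
  ι : QX R →+* A
  ι_inj : Function.Injective ι
  D : A
  comm_rule : ∀ p : Polynomial R,
    D * ι (algebraMap (Polynomial R) (QX R) p)
      = ι (algebraMap (Polynomial R) (QX R) (σ p)) * D
        + ι (algebraMap (Polynomial R) (QX R) (δ p))
  δ_leibniz : ∀ f g, δ (f * g) = σ f * δ g + δ f * g
  coeff : A → ℕ → QX R
  coeff_inj : ∀ P Q : A, (∀ i, coeff P i = coeff Q i) → P = Q
  coeff_add : ∀ P Q i, coeff (P + Q) i = coeff P i + coeff Q i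
  coeff_smul : ∀ (f : QX R) (P : A) (i), coeff (ι f * P) i = f * coeff P i
  coeff_bdd : ∀ P : A, ∃ N, ∀ i, N < i → coeff P i = 0
  coeff_mk : ∀ (N : ℕ) (c : ℕ → QX R), (∀ i, N < i → c i = 0) →
    ∀ j, coeff (∑ i ∈ Finset.range (N + 1), ι (c i) * D ^ i) j = c j

namespace OreAlg

variable {R : Type} [CommRing R] [IsDomain R] {A : Type} [Ring A] (O : OreAlg R A)

/-- The embedding of `R[x]` into the Ore algebra. -/
def ιp (f : Polynomial R) : A := O.ι (algebraMap (Polynomial R) (QX R) f)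

/-- The `i`-th `∂`-coefficient of `P` lies in `R[x]`. -/
def PolyCoeff (P : A) (i : ℕ) : Prop :=
  ∃ f : Polynomial R, O.coeff P i = algebraMap (Polynomial R) (QX R) f

/-- `P` belongs to the subring `R[x][∂]` of `Q_R(x)[∂]`. -/
def InB (P : A) : Prop := ∀ i, O.PolyCoeff P i

/-- The order (degree in `∂`) of an operator. -/
def ord (P : A) : ℕ := sSup {i | O.coeff P i ≠ 0}

/-- The leading coefficient (with respect to `∂`), in `Q_R(x)`. -/
def lc (P : A) : QX R := O.coeff P (O.ord P)

/-- The contraction ideal `cont(L) = Q_R(x)[∂]·L ∩ R[x][∂]`. -/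
def cont (L : A) : Set A := {P | O.InB P ∧ ∃ Q : A, P = Q * L}

/-- The `k`-th submodule `M_k(L) = {P ∈ cont(L) : deg_∂ P ≤ k}`. -/
def M (L : A) (k : ℕ) : Set A := {P | P ∈ O.cont L ∧ O.ord P ≤ k}

/-- The `k`-th coefficient ideal `I_k = {[∂^k]P : P ∈ M_k} ∪ {0}` (as a set of
polynomials; `0` arises from `P = 0`). -/
def Icoeff (L : A) (k : ℕ) : Set (Polynomial R) :=
  {f | ∃ P ∈ O.M L k, O.coeff P k = algebraMap (Polynomial R) (QX R) f}

end OreAlg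

/-- `gcd(p, w) = 1` in `R[x]`: every common divisor is a unit. -/
def Copr {R : Type} [CommRing R] (p w : Polynomial R) : Prop :=
  ∀ d : Polynomial R, d ∣ p → d ∣ w → IsUnit d

namespace OreAlg

variable {R : Type} [CommRing R] [IsDomain R] {A : Type} [Ring A] (O : OreAlg R A)

/-- `P` is a `p`-removing operator for `L` over `R[x]`, of order `k`:
`P·L ∈ R[x][∂]` and `σ^{-k}(lc_∂(P·L)) = (w/(v·p))·lc_∂(L)` with `gcd(p, w) = 1`. -/
def IsRemoving (L : A) (p : Polynomial R) (k : ℕ) (P : A) : Prop :=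
  O.ord P = k ∧ O.InB (P * L) ∧
  ∃ w v t l : Polynomial R, v ≠ 0 ∧ Copr p w ∧
    O.lc (P * L) = algebraMap (Polynomial R) (QX R) t ∧
    O.lc L = algebraMap (Polynomial R) (QX R) l ∧
    (⇑O.σ.symm)^[k] t * (v * p) = w * l

/-- `p` is removable from `L` (at some order). -/
def Removable (L : A) (p : Polynomial R) : Prop :=
  ∃ k P, O.IsRemoving L p k P

/-- Factorization data for `lc_∂(L) = c·p₁^{e₁}⋯p_m^{e_m}`, with `c ∈ R` and the
`pᵢ ∈ R[x] \ R` irreducible and pairwise coprime; `L` has order `r > 0`. -/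
def Factored (L : A) (r m : ℕ) (c : R) (p : Fin m → Polynomial R)
    (e : Fin m → ℕ) : Prop :=
  O.ord L = r ∧ 0 < r ∧ c ≠ 0 ∧
  O.lc L = algebraMap (Polynomial R) (QX R) (C c * ∏ i, p i ^ e i) ∧
  (∀ i, Irreducible (p i) ∧ 0 < (p i).natDegree) ∧
  (∀ i j, i ≠ j → Copr (p i) (p j))

/-- `T` is a desingularized operator for `L`: `T ∈ cont(L)` and
`σ^{r-k}(lc_∂(T)) = (a/(b·∏ pᵢ^{kᵢ}))·lc_∂(L)` with `a, b ∈ R`, where each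
`pᵢ^{dᵢ}` with `dᵢ > kᵢ` is non-removable from `L`. -/
def Desing (L : A) (r m : ℕ) (c : R) (p : Fin m → Polynomial R)
    (e : Fin m → ℕ) (T : A) : Prop :=
  T ∈ O.cont L ∧ r ≤ O.ord T ∧
  ∃ (a b : R) (k : Fin m → ℕ) (t l : Polynomial R),
    b ≠ 0 ∧ (∀ i, k i ≤ e i) ∧
    O.lc T = algebraMap (Polynomial R) (QX R) t ∧
    O.lc L = algebraMap (Polynomial R) (QX R) l ∧
    (⇑O.σ.symm)^[O.ord T - r] t * (C b * ∏ i, p i ^ k i) = C a * l ∧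
    (∀ i (d : ℕ), k i < d → ¬ O.Removable L (p i ^ d))

/-- The left ideal of `R[x][∂]` generated by a set `S ⊆ R[x][∂]`. -/
def LIdeal (S : Set A) : Set A :=
  {P | ∃ (n : ℕ) (co s : Fin n → A), (∀ i, O.InB (co i)) ∧ (∀ i, s i ∈ S) ∧
    P = ∑ i, co i * s i}

/-- The constant `a ∈ R` viewed inside the Ore algebra. -/
def cst (a : R) : A := O.ιp (C a)

/-- The saturation `I : a^∞ = {P ∈ R[x][∂] : aⁱ·P ∈ I for some i}`. -/
def sat (I : Set A) (a : R) : Set A :=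
  {P | O.InB P ∧ ∃ i : ℕ, O.cst a ^ i * P ∈ I}

end OreAlg

/-!
Write `f' = σ^{-(ℓ-r)}(f)`. Because `cont(L)` is generated by `M_ℓ`, the leading coefficient `t`
of any operator of order `j ≥ r` in `cont(L)` satisfies `σ^{-(j-r)}(t) = σ^{-(ℓ-r)}(s)` for some
`s ∈ I_ℓ`: for `j ≤ ℓ` multiply by `∂^{ℓ-j}`, for `j > ℓ` write the operator as `∂·Q + P₀` with
`Q ∈ cont(L)` and `ord P₀ ≤ ℓ` and descend. Pseudo-division by the minimal-degree element `f`
then makes `f'` divide every such `σ^{-(j-r)}(t)` up to a nonzero constant of `R`.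
Applied to `L` itself this forces `f' = u·∏ pᵢ^{mᵢ}` with `mᵢ ≤ eᵢ`, so `F` removes `pᵢ^{eᵢ-mᵢ}`;
applied to `P·L` for a `pᵢ^d`-removing `P` it shows that no higher power of `pᵢ` is removable.
Finally a desingularized `T` has `c_T·g = σ^{-(ℓ-r)}(s)` with `s ∈ I_ℓ` of the degree of `f`,
so `s = u·f` by reducedness and `c_T = u·c_F`.
-/

theorem exists_dvd_and_associated_of_dvd_mul_prod_pow {M ι : Type*}
    [CommMonoidWithZero M] [IsCancelMulZero M] [DecompositionMonoid M] {p : ι → M}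
    (hp : ∀ i, Prime (p i)) (e : ι → ℕ) (s : Finset ι) {x y : M} (h : x ∣ y * ∏ i ∈ s, p i ^ e i) :
    ∃ z, z ∣ y ∧ ∃ k : ι → ℕ, (∀ i, k i ≤ e i) ∧ Associated x (z * ∏ i ∈ s, p i ^ k i) := by
  classical
  induction s using Finset.induction_on generalizing x with
  | empty => exact ⟨x, by simpa using h, 0, fun i => Nat.zero_le _, by simp⟩
  | insert a s ha ih =>
    rw [Finset.prod_insert ha, mul_left_comm] at h
    obtain ⟨x₁, x₂, hx₁, hx₂, rfl⟩ := exists_dvd_and_dvd_of_dvd_mul h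
    obtain ⟨j, hj, hx₁j⟩ := (dvd_prime_pow (hp a) _).mp hx₁
    obtain ⟨z, hz, k, hk, hx₂k⟩ := ih hx₂
    refine ⟨z, hz, Function.update k a j, fun i => ?_, ?_⟩
    · rcases eq_or_ne i a with rfl | hia
      · simpa using hj
      · simpa [hia] using hk i
    · have hs : ∏ i ∈ s, p i ^ Function.update k a j i = ∏ i ∈ s, p i ^ k i :=
        Finset.prod_congr rfl fun i hi => by
          rw [Function.update_of_ne (ne_of_mem_of_not_mem hi ha)]
      rw [Finset.prod_insert ha, hs, Function.update_self, mul_left_comm]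
      exact hx₁j.mul_mul hx₂k

theorem not_pow_succ_dvd_mul_prod_pow {M ι : Type*} [CommMonoidWithZero M] [IsCancelMulZero M]
    [DecompositionMonoid M] {p : ι → M} {s : Finset ι} {i : ι} (hi : i ∈ s)
    (hcop : ∀ j ∈ s, j ≠ i → IsRelPrime (p i) (p j)) (hp0 : p i ≠ 0) (e : ι → ℕ) {y : M}
    (hy : ¬ p i ∣ y) : ¬ p i ^ (e i + 1) ∣ y * ∏ j ∈ s, p j ^ e j := by
  classical
  intro h
  have hZ : IsRelPrime (p i ^ (e i + 1)) (∏ j ∈ s.erase i, p j ^ e j) :=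
    IsRelPrime.prod_right fun j hj => ((hcop j (Finset.mem_of_mem_erase hj)
      (Finset.ne_of_mem_erase hj)).pow_left).pow_right
  rw [← Finset.mul_prod_erase s _ hi, ← mul_assoc] at h
  have h' := hZ.dvd_of_dvd_mul_right h
  rw [pow_succ, mul_comm y] at h'
  exact hy ((mul_dvd_mul_iff_left (pow_ne_zero _ hp0)).mp h')

namespace Polynomial

variable {R : Type*} [CommRing R] [IsDomain R]

theorem exists_dvd_C_mul_of_forall_natDegree_le {I : Ideal R[X]} {f : R[X]} (hfI : f ∈ I)
    (hf0 : f ≠ 0) (hmin : ∀ s ∈ I, s ≠ 0 → f.natDegree ≤ s.natDegree) {s : R[X]} (hs : s ∈ I) :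
    ∃ d : R, d ≠ 0 ∧ f ∣ C d * s := by
  induction hn : s.natDegree using Nat.strong_induction_on generalizing s with
  | _ n ih =>
  rcases eq_or_ne s 0 with rfl | hs0
  · exact ⟨1, one_ne_zero, by rw [mul_zero]; exact dvd_zero f⟩
  have hlf : f.leadingCoeff ≠ 0 := leadingCoeff_ne_zero.mpr hf0
  have hls : s.leadingCoeff ≠ 0 := leadingCoeff_ne_zero.mpr hs0
  set k := s.natDegree - f.natDegree
  set s' := C f.leadingCoeff * s - C s.leadingCoeff * X ^ k * f
  have hdeg : (C f.leadingCoeff * s).degree = (C s.leadingCoeff * X ^ k * f).degree := by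
    rw [degree_C_mul hlf, degree_mul, degree_C_mul_X_pow k hls, degree_eq_natDegree hf0,
      degree_eq_natDegree hs0]
    norm_cast
    have := hmin s hs hs0
    omega
  have hlt : s'.degree < s.degree := by
    have := degree_sub_lt_left hdeg (mul_ne_zero (C_ne_zero.mpr hlf) hs0)
      (by simp only [leadingCoeff_mul, leadingCoeff_C, leadingCoeff_X_pow]; ring)
    rwa [degree_C_mul hlf] at this
  obtain ⟨d, hd, hdvd⟩ : ∃ d : R, d ≠ 0 ∧ f ∣ C d * s' := by
    rcases eq_or_ne s' 0 with h | h
    · exact ⟨1, one_ne_zero, by rw [h, mul_zero]; exact dvd_zero f⟩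
    · exact ih _ (hn ▸ natDegree_lt_natDegree h hlt)
        (I.sub_mem (I.mul_mem_left _ hs) (I.mul_mem_left _ hfI)) rfl
  refine ⟨d * f.leadingCoeff, mul_ne_zero hd hlf, ?_⟩
  have hsplit : C (d * f.leadingCoeff) * s = C d * s' + C d * C s.leadingCoeff * X ^ k * f := by
    simp only [s', C_mul]
    ring
  rw [hsplit]
  exact dvd_add hdvd (dvd_mul_left f _)

theorem exists_eq_C_mul_prod_pow_of_dvd [DecompositionMonoid R[X]] {ι : Type*} {p : ι → R[X]}
    (hp : ∀ i, Prime (p i)) (e : ι → ℕ) (s : Finset ι) {x : R[X]} {d : R} (hd : d ≠ 0)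
    (h : x ∣ C d * ∏ i ∈ s, p i ^ e i) :
    ∃ u : R, ∃ k : ι → ℕ, (∀ i, k i ≤ e i) ∧ x = C u * ∏ i ∈ s, p i ^ k i := by
  obtain ⟨z, hz, k, hk, v, hv⟩ := exists_dvd_and_associated_of_dvd_mul_prod_pow hp e s h
  obtain ⟨w, -, hw⟩ := isUnit_iff.mp (v⁻¹).isUnit
  have hz0 : z.natDegree = 0 :=
    Nat.le_zero.mp ((natDegree_le_of_dvd hz (C_ne_zero.mpr hd)).trans (natDegree_C d).le)
  refine ⟨z.coeff 0 * w, k, hk, ?_⟩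
  rw [C_mul, ← eq_C_of_natDegree_eq_zero hz0, hw, mul_right_comm, ← hv,
    Units.mul_inv_cancel_right]

theorem ringEquiv_apply_eq_comp {S : Type*} [CommSemiring S] (σ : S[X] ≃+* S[X])
    (hσ : ∀ r, σ (C r) = C r) (q : S[X]) : σ q = q.comp (σ X) := by
  have : (σ : S[X] →+* S[X]) = eval₂RingHom C (σ X) :=
    ringHom_ext (fun r => by simp [hσ]) (by simp)
  exact DFunLike.congr_fun this q

theorem natDegree_ringEquiv_apply (σ : R[X] ≃+* R[X]) (hσ : ∀ r, σ (C r) = C r) (q : R[X]) :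
    (σ q).natDegree = q.natDegree := by
  have hσ' : ∀ r, σ.symm (C r) = C r := fun r => σ.symm_apply_eq.mpr (hσ r).symm
  -- `X = (σ⁻¹ X) ∘ (σ X)`, so `σ X` has degree one.
  have hX : (σ X).natDegree = 1 := by
    have h := congrArg natDegree (σ.apply_symm_apply X)
    rw [ringEquiv_apply_eq_comp σ hσ, natDegree_comp, ringEquiv_apply_eq_comp σ.symm hσ',
      natDegree_X, natDegree_comp, natDegree_X, one_mul] at h
    exact Nat.eq_one_of_mul_eq_one_left h
  rw [ringEquiv_apply_eq_comp σ hσ, natDegree_comp, hX, mul_one]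

end Polynomial

namespace OreAlg

variable {R : Type} [CommRing R] [IsDomain R] {A : Type} [Ring A] (O : OreAlg R A)

local notation "φ" => algebraMap R[X] (QX R)

lemma ι_algebraMap (q : R[X]) : O.ι (φ q) = O.ιp q := rfl

def coeffAddHom (i : ℕ) : A →+ QX R :=
  AddMonoidHom.mk' (O.coeff · i) (O.coeff_add · · i)

lemma coeff_zero (i : ℕ) : O.coeff (0 : A) i = 0 := map_zero (O.coeffAddHom i)

lemma coeff_sub (P Q : A) (i : ℕ) : O.coeff (P - Q) i = O.coeff P i - O.coeff Q i :=
  map_sub (O.coeffAddHom i) P Q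

lemma coeff_sum {ι : Type*} (s : Finset ι) (F : ι → A) (i : ℕ) :
    O.coeff (∑ j ∈ s, F j) i = ∑ j ∈ s, O.coeff (F j) i :=
  map_sum (O.coeffAddHom i) F s

lemma coeff_ιp_mul (q : R[X]) (P : A) (i : ℕ) :
    O.coeff (O.ιp q * P) i = φ q * O.coeff P i :=
  O.coeff_smul _ _ _

lemma le_ord {P : A} {i : ℕ} (h : O.coeff P i ≠ 0) : i ≤ O.ord P := by
  obtain ⟨N, hN⟩ := O.coeff_bdd P
  exact le_csSup ⟨N, fun j hj => not_lt.mp (mt (hN j) hj)⟩ h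

lemma coeff_eq_zero_of_ord_lt {P : A} {i : ℕ} (h : O.ord P < i) : O.coeff P i = 0 :=
  not_not.mp (mt O.le_ord (not_le.mpr h))

lemma ord_le_iff {P : A} {N : ℕ} : O.ord P ≤ N ↔ ∀ i, N < i → O.coeff P i = 0 :=
  ⟨fun h _ hi => O.coeff_eq_zero_of_ord_lt (h.trans_lt hi),
    fun h => csSup_le' fun _ hi => not_lt.mp (mt (h _) hi)⟩

lemma ord_zero : O.ord (0 : A) = 0 :=
  Nat.le_zero.mp (O.ord_le_iff.mpr fun i _ => O.coeff_zero i)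

lemma lc_ne_zero {P : A} (hP : P ≠ 0) : O.lc P ≠ 0 := by
  have hne : {i | O.coeff P i ≠ 0}.Nonempty := by
    by_contra h
    exact hP (O.coeff_inj P 0 fun i => by
      rw [O.coeff_zero]; by_contra hi; exact h ⟨i, hi⟩)
  obtain ⟨N, hN⟩ := O.coeff_bdd P
  exact Nat.sSup_mem hne ⟨N, fun j hj => not_lt.mp (mt (hN j) hj)⟩

lemma ord_add_le {P Q : A} {N : ℕ} (hP : O.ord P ≤ N) (hQ : O.ord Q ≤ N) :
    O.ord (P + Q) ≤ N :=
  O.ord_le_iff.mpr fun i hi => by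
    rw [O.coeff_add, O.ord_le_iff.mp hP i hi, O.ord_le_iff.mp hQ i hi, add_zero]

lemma ord_sub_le {P Q : A} {N : ℕ} (hP : O.ord P ≤ N) (hQ : O.ord Q ≤ N) :
    O.ord (P - Q) ≤ N :=
  O.ord_le_iff.mpr fun i hi => by
    rw [O.coeff_sub, O.ord_le_iff.mp hP i hi, O.ord_le_iff.mp hQ i hi, sub_zero]

lemma eq_sum_coeff {P : A} {N : ℕ} (hN : O.ord P ≤ N) :
    P = ∑ i ∈ Finset.range (N + 1), O.ι (O.coeff P i) * O.D ^ i :=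
  O.coeff_inj _ _ fun j => (O.coeff_mk N _ (O.ord_le_iff.mp hN) j).symm

lemma coeff_ιp_mul_D_pow (q : R[X]) (n j : ℕ) :
    O.coeff (O.ιp q * O.D ^ n) j = if j = n then φ q else 0 := by
  have h := O.coeff_mk n (fun i => if i = n then φ q else 0) (fun i hi => if_neg hi.ne') j
  rwa [Finset.sum_eq_single_of_mem n (Finset.self_mem_range_succ n)
    fun i _ hi => by rw [if_neg hi, map_zero, zero_mul], if_pos rfl] at h

lemma ord_ιp_mul_D_pow_le (q : R[X]) (n : ℕ) : O.ord (O.ιp q * O.D ^ n) ≤ n :=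
  O.ord_le_iff.mpr fun j hj => by rw [O.coeff_ιp_mul_D_pow, if_neg hj.ne']

variable {O} in
lemma InB.add {P Q : A} (hP : O.InB P) (hQ : O.InB Q) : O.InB (P + Q) := fun i => by
  obtain ⟨a, ha⟩ := hP i
  obtain ⟨b, hb⟩ := hQ i
  exact ⟨a + b, by rw [O.coeff_add, ha, hb, map_add]⟩

variable {O} in
lemma InB.sub {P Q : A} (hP : O.InB P) (hQ : O.InB Q) : O.InB (P - Q) := fun i => by
  obtain ⟨a, ha⟩ := hP i
  obtain ⟨b, hb⟩ := hQ i
  exact ⟨a - b, by rw [O.coeff_sub, ha, hb, map_sub]⟩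

lemma InB_zero : O.InB (0 : A) := fun _ => ⟨0, by rw [O.coeff_zero, map_zero]⟩

variable {O} in
lemma InB.sum {ι : Type*} {s : Finset ι} {F : ι → A} (h : ∀ i ∈ s, O.InB (F i)) :
    O.InB (∑ i ∈ s, F i) := by
  classical
  induction s using Finset.induction_on with
  | empty => simpa using O.InB_zero
  | insert a s ha ih =>
    rw [Finset.sum_insert ha]
    exact (h a (s.mem_insert_self a)).add (ih fun i hi => h i (Finset.mem_insert_of_mem hi))

variable {O} in
lemma InB.ιp_mul {P : A} (q : R[X]) (hP : O.InB P) : O.InB (O.ιp q * P) := fun i => by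
  obtain ⟨a, ha⟩ := hP i
  exact ⟨q * a, by rw [O.coeff_ιp_mul, ha, map_mul]⟩

lemma InB_ιp_mul_D_pow (q : R[X]) (n : ℕ) : O.InB (O.ιp q * O.D ^ n) := fun j =>
  ⟨if j = n then q else 0, by rw [O.coeff_ιp_mul_D_pow]; split_ifs <;> simp⟩

variable {O} in
lemma InB.eq_sum {P : A} (hP : O.InB P) {N : ℕ} (hN : O.ord P ≤ N) :
    ∃ a : ℕ → R[X], (∀ i, O.coeff P i = φ (a i)) ∧
      P = ∑ i ∈ Finset.range (N + 1), O.ιp (a i) * O.D ^ i := by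
  choose a ha using hP
  refine ⟨a, ha, (O.eq_sum_coeff hN).trans (Finset.sum_congr rfl fun i _ => ?_)⟩
  rw [ha, ι_algebraMap]

lemma δ_zero : O.δ 0 = 0 := by
  simpa using O.δ_add 0 0

lemma D_mul_ιp_mul_D_pow (q : R[X]) (i : ℕ) :
    O.D * (O.ιp q * O.D ^ i) = O.ιp (O.σ q) * O.D ^ (i + 1) + O.ιp (O.δ q) * O.D ^ i := by
  rw [← mul_assoc, ← ι_algebraMap, O.comm_rule, add_mul, mul_assoc, ← pow_succ', ι_algebraMap,
    ι_algebraMap]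

variable {O} in
lemma InB.D_mul {P : A} (hP : O.InB P) : O.InB (O.D * P) := by
  obtain ⟨a, -, hPa⟩ := hP.eq_sum le_rfl
  rw [hPa, Finset.mul_sum]
  exact InB.sum fun i _ => by
    rw [O.D_mul_ιp_mul_D_pow]
    exact (O.InB_ιp_mul_D_pow _ _).add (O.InB_ιp_mul_D_pow _ _)

variable {O} in
lemma InB.D_pow_mul {P : A} (hP : O.InB P) (n : ℕ) : O.InB (O.D ^ n * P) := by
  induction n with
  | zero => simpa using hP
  | succ n ih => simpa only [pow_succ', mul_assoc] using ih.D_mul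

variable {O} in
lemma InB.mul {P Q : A} (hP : O.InB P) (hQ : O.InB Q) : O.InB (P * Q) := by
  obtain ⟨a, -, hPa⟩ := hP.eq_sum le_rfl
  rw [hPa, Finset.sum_mul]
  exact InB.sum fun i _ => by
    rw [mul_assoc]
    exact (hQ.D_pow_mul i).ιp_mul (a i)

lemma coeff_D_mul_succ {P : A} {a : ℕ → R[X]} (ha : ∀ i, O.coeff P i = φ (a i))
    (j : ℕ) : O.coeff (O.D * P) (j + 1) = φ (O.σ (a j) + O.δ (a (j + 1))) := by
  have hP : O.ord P ≤ O.ord P + j + 1 := by omega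
  rw [O.eq_sum_coeff hP, Finset.mul_sum, O.coeff_sum]
  simp only [ha, ι_algebraMap, O.D_mul_ιp_mul_D_pow, O.coeff_add, O.coeff_ιp_mul_D_pow,
    Finset.sum_add_distrib, add_left_inj, Finset.sum_ite_eq, Finset.mem_range, map_add]
  rw [if_pos (by omega), if_pos (by omega)]

lemma ord_D_mul_le_and_coeff {P : A} (hP : O.InB P) {N : ℕ} (hN : O.ord P ≤ N)
    {c : R[X]} (hc : O.coeff P N = φ c) :
    O.ord (O.D * P) ≤ N + 1 ∧ O.coeff (O.D * P) (N + 1) = φ (O.σ c) := by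
  choose a ha using hP
  have hzero : ∀ i, N < i → a i = 0 := fun i hi =>
    IsFractionRing.injective R[X] (QX R) (by rw [← ha, map_zero, O.ord_le_iff.mp hN i hi])
  refine ⟨O.ord_le_iff.mpr fun i hi => ?_, ?_⟩
  · obtain ⟨j, rfl⟩ : ∃ j, i = j + 1 := ⟨i - 1, by omega⟩
    rw [O.coeff_D_mul_succ ha, hzero j (by omega), hzero (j + 1) (by omega), map_zero,
      O.δ_zero, add_zero, map_zero]
  · rw [O.coeff_D_mul_succ ha, hzero (N + 1) N.lt_succ_self, O.δ_zero, add_zero,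
      IsFractionRing.injective R[X] (QX R) ((ha N).symm.trans hc)]

lemma ord_D_pow_mul_le_and_coeff {P : A} (hP : O.InB P) {N : ℕ} (hN : O.ord P ≤ N)
    {c : R[X]} (hc : O.coeff P N = φ c) (n : ℕ) :
    O.ord (O.D ^ n * P) ≤ N + n ∧ O.coeff (O.D ^ n * P) (N + n) = φ ((⇑O.σ)^[n] c) := by
  induction n with
  | zero => simpa using ⟨hN, hc⟩
  | succ n ih =>
    rw [pow_succ', mul_assoc, ← add_assoc, Function.iterate_succ_apply']
    exact O.ord_D_mul_le_and_coeff (hP.D_pow_mul n) ih.1 ih.2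

lemma ord_D_mul {Q : A} (hQ : O.InB Q) (hQ0 : Q ≠ 0) : O.ord (O.D * Q) = O.ord Q + 1 := by
  obtain ⟨c, hc⟩ := hQ (O.ord Q)
  obtain ⟨hle, htop⟩ := O.ord_D_mul_le_and_coeff hQ le_rfl hc
  refine hle.antisymm (O.le_ord ?_)
  rw [htop]
  have hc0 : c ≠ 0 := by rintro rfl; exact O.lc_ne_zero hQ0 (by rw [lc, hc, map_zero])
  exact fun h => hc0 (O.σ.injective
    (IsFractionRing.injective R[X] (QX R) (by rw [h, map_zero, map_zero])))

lemma ord_mul_le_and_coeff (P : A) {Y : A} (hY : O.InB Y) {y : R[X]}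
    (hy : O.coeff Y (O.ord Y) = φ y) :
    O.ord (P * Y) ≤ O.ord P + O.ord Y ∧
      O.coeff (P * Y) (O.ord P + O.ord Y) = O.lc P * φ ((⇑O.σ)^[O.ord P] y) := by
  have hexp : ∀ n, O.coeff (P * Y) n =
      ∑ i ∈ Finset.range (O.ord P + 1), O.coeff P i * O.coeff (O.D ^ i * Y) n := fun n => by
    conv_lhs => rw [O.eq_sum_coeff (le_refl (O.ord P))]
    rw [Finset.sum_mul, O.coeff_sum]
    exact Finset.sum_congr rfl fun i _ => by rw [mul_assoc, O.coeff_smul]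
  have hDY := O.ord_D_pow_mul_le_and_coeff hY le_rfl hy
  refine ⟨O.ord_le_iff.mpr fun n hn => ?_, ?_⟩
  · rw [hexp]
    refine Finset.sum_eq_zero fun i hi => ?_
    have := Finset.mem_range.mp hi
    rw [O.coeff_eq_zero_of_ord_lt ((hDY i).1.trans_lt (by omega)), mul_zero]
  · rw [hexp, Finset.sum_eq_single_of_mem _ (Finset.self_mem_range_succ _) fun i hi hne => ?_,
      add_comm, (hDY _).2, lc]
    have := Finset.mem_range.mp hi
    rw [O.coeff_eq_zero_of_ord_lt ((hDY i).1.trans_lt (by omega)), mul_zero]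

lemma ord_mul {P Y : A} (hP : P ≠ 0) (hY : O.InB Y) (hY0 : Y ≠ 0) :
    O.ord (P * Y) = O.ord P + O.ord Y := by
  obtain ⟨y, hy⟩ := hY (O.ord Y)
  obtain ⟨hle, htop⟩ := O.ord_mul_le_and_coeff P hY hy
  refine hle.antisymm (O.le_ord ?_)
  have hy0 : y ≠ 0 := by rintro rfl; exact O.lc_ne_zero hY0 (by rw [lc, hy, map_zero])
  rw [htop]
  refine mul_ne_zero (O.lc_ne_zero hP) fun h => ?_
  refine hy0 ((O.σ.injective.iterate (O.ord P)) ?_)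
  rw [iterate_map_zero]
  exact IsFractionRing.injective R[X] (QX R) (by rw [h, map_zero])

lemma InB_ιp (q : R[X]) : O.InB (O.ιp q) := by
  simpa using O.InB_ιp_mul_D_pow q 0

lemma InB_D_pow (n : ℕ) : O.InB (O.D ^ n) := by
  simpa [ιp] using O.InB_ιp_mul_D_pow 1 n

lemma zero_mem_cont (L : A) : (0 : A) ∈ O.cont L :=
  ⟨O.InB_zero, 0, (zero_mul L).symm⟩

lemma self_mem_cont {L : A} (hL : O.InB L) : L ∈ O.cont L :=
  ⟨hL, 1, (one_mul L).symm⟩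

lemma add_mem_cont {L P Q : A} (hP : P ∈ O.cont L) (hQ : Q ∈ O.cont L) :
    P + Q ∈ O.cont L := by
  obtain ⟨hPB, P', rfl⟩ := hP
  obtain ⟨hQB, Q', rfl⟩ := hQ
  exact ⟨hPB.add hQB, P' + Q', (add_mul _ _ _).symm⟩

lemma mul_mem_cont {L b P : A} (hb : O.InB b) (hP : P ∈ O.cont L) : b * P ∈ O.cont L := by
  obtain ⟨hPB, P', rfl⟩ := hP
  exact ⟨hb.mul hPB, b * P', (mul_assoc _ _ _).symm⟩

lemma sum_mem_cont {L : A} {ι : Type*} {s : Finset ι} {F : ι → A}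
    (h : ∀ i ∈ s, F i ∈ O.cont L) : ∑ i ∈ s, F i ∈ O.cont L := by
  classical
  induction s using Finset.induction_on with
  | empty => simpa using O.zero_mem_cont L
  | insert a s ha ih =>
    rw [Finset.sum_insert ha]
    exact O.add_mem_cont (h a (s.mem_insert_self a))
      (ih fun i hi => h i (Finset.mem_insert_of_mem hi))

def coeffIdeal (L : A) (l : ℕ) : Ideal R[X] where
  carrier := O.Icoeff L l
  zero_mem' := ⟨0, ⟨O.zero_mem_cont L, O.ord_zero.trans_le l.zero_le⟩, by
    rw [O.coeff_zero, map_zero]⟩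
  add_mem' := by
    rintro s t ⟨P, ⟨hP, hPl⟩, hPs⟩ ⟨Q, ⟨hQ, hQl⟩, hQt⟩
    exact ⟨P + Q, ⟨O.add_mem_cont hP hQ, O.ord_add_le hPl hQl⟩, by
      rw [O.coeff_add, hPs, hQt, map_add]⟩
  smul_mem' := by
    rintro q s ⟨P, ⟨hP, hPl⟩, hPs⟩
    refine ⟨O.ιp q * P, ⟨O.mul_mem_cont (O.InB_ιp q) hP, O.ord_le_iff.mpr fun i hi => ?_⟩, ?_⟩
    · rw [O.coeff_ιp_mul, O.coeff_eq_zero_of_ord_lt (hPl.trans_lt hi), mul_zero]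
    · rw [O.coeff_ιp_mul, hPs, smul_eq_mul, map_mul]

variable {O} in
lemma InB.exists_eq_D_mul_add {P : A} (hP : O.InB P) :
    ∃ b q, O.InB b ∧ P = O.D * b + O.ιp q := by
  suffices h : ∀ N (P : A), O.InB P → O.ord P ≤ N → ∃ b q, O.InB b ∧ P = O.D * b + O.ιp q from
    h _ P hP le_rfl
  intro N
  induction N with
  | zero =>
    intro P hP hN
    obtain ⟨a, -, hPa⟩ := hP.eq_sum hN
    exact ⟨0, a 0, O.InB_zero, by simpa using hPa⟩
  | succ N ih =>
    intro P hP hN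
    obtain ⟨c, hc⟩ := hP (N + 1)
    have hMB := O.InB_ιp_mul_D_pow (O.σ.symm c) N
    -- `∂·σ⁻¹(c)∂^N` has the same leading term `c ∂^(N+1)` as `P`.
    have hDM := O.ord_D_mul_le_and_coeff hMB (O.ord_ιp_mul_D_pow_le _ N)
      (by rw [O.coeff_ιp_mul_D_pow, if_pos rfl])
    rw [O.σ.apply_symm_apply] at hDM
    obtain ⟨b, q, hb, hPb⟩ := ih _ (hP.sub hMB.D_mul) (O.ord_le_iff.mpr fun i hi => by
      rcases (Nat.succ_le_of_lt hi).eq_or_lt with rfl | hi'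
      · rw [O.coeff_sub, hc, hDM.2, sub_self]
      · rw [O.coeff_sub, O.ord_le_iff.mp hN i hi', O.ord_le_iff.mp hDM.1 i hi', sub_zero])
    exact ⟨_, q, hMB.add hb, by rw [mul_add, add_assoc, ← hPb, add_sub_cancel]⟩

lemma iterate_σ_symm_mem_Icoeff {L : A} {l : ℕ} (hcont : O.cont L = O.LIdeal (O.M L l))
    (n : ℕ) {P : A} {t : R[X]} (hP : P ∈ O.cont L) (hord : O.ord P ≤ l + n)
    (ht : O.coeff P (l + n) = φ t) : (⇑O.σ.symm)^[n] t ∈ O.Icoeff L l := by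
  induction n generalizing P t with
  | zero => exact ⟨P, ⟨hP, hord⟩, ht⟩
  | succ n ih =>
    obtain ⟨k, co, s, hco, hs, rfl⟩ : P ∈ O.LIdeal (O.M L l) := hcont ▸ hP
    choose b q hb hcoq using fun i => (hco i).exists_eq_D_mul_add
    set Q := ∑ i, b i * s i
    set P₀ := ∑ i, O.ιp (q i) * s i
    have hQ : Q ∈ O.cont L := O.sum_mem_cont fun i _ => O.mul_mem_cont (hb i) (hs i).1
    have hP₀ : O.ord P₀ ≤ l := O.ord_le_iff.mpr fun j hj => by
      rw [O.coeff_sum]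
      exact Finset.sum_eq_zero fun i _ => by
        rw [O.coeff_ιp_mul, O.coeff_eq_zero_of_ord_lt ((hs i).2.trans_lt hj), mul_zero]
    have hDQ : O.D * Q = ∑ i, co i * s i - P₀ := by
      simp only [Q, P₀, hcoq, add_mul, mul_assoc, Finset.sum_add_distrib, Finset.mul_sum,
        add_sub_cancel_right]
    have hQord : O.ord Q ≤ l + n := by
      rcases eq_or_ne Q 0 with hQ0 | hQ0
      · rw [hQ0, O.ord_zero]
        exact Nat.zero_le _
      · have := O.ord_sub_le hord (hP₀.trans (by omega))
        rw [← hDQ, O.ord_D_mul hQ.1 hQ0] at this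
        omega
    obtain ⟨a, ha⟩ := hQ.1 (l + n)
    have hta : t = O.σ a := by
      apply IsFractionRing.injective R[X] (QX R)
      rw [← ht, ← (O.ord_D_mul_le_and_coeff hQ.1 hQord ha).2, hDQ, O.coeff_sub,
        O.coeff_eq_zero_of_ord_lt (by omega : O.ord P₀ < l + n + 1), sub_zero]
      rfl
    rw [Function.iterate_succ_apply, hta, O.σ.symm_apply_apply]
    exact ih hQ hQord ha

lemma iterate_σ_mem_Icoeff {L : A} {l j : ℕ} {P : A} {t : R[X]} (hP : P ∈ O.cont L)
    (hPj : O.ord P ≤ j) (hjl : j ≤ l) (ht : O.coeff P j = φ t) :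
    (⇑O.σ)^[l - j] t ∈ O.Icoeff L l := by
  obtain ⟨hle, hc⟩ := O.ord_D_pow_mul_le_and_coeff hP.1 hPj ht (l - j)
  rw [Nat.add_sub_cancel' hjl] at hle hc
  exact ⟨_, ⟨O.mul_mem_cont (O.InB_D_pow _) hP, hle⟩, hc⟩

lemma σ_symm_C (a : R) : O.σ.symm (C a) = C a :=
  O.σ.symm_apply_eq.mpr (O.σ_fix a).symm

lemma iterate_σ_symm_C_mul (n : ℕ) (a : R) (q : R[X]) :
    (⇑O.σ.symm)^[n] (C a * q) = C a * (⇑O.σ.symm)^[n] q := by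
  rw [iterate_map_mul, Function.iterate_fixed (O.σ_symm_C a)]

lemma iterate_σ_symm_eq_zero {n : ℕ} {q : R[X]} : (⇑O.σ.symm)^[n] q = 0 ↔ q = 0 :=
  (O.σ.symm.injective.iterate n).eq_iff' (iterate_map_zero _ n)

lemma natDegree_iterate_σ_symm (n : ℕ) (q : R[X]) :
    ((⇑O.σ.symm)^[n] q).natDegree = q.natDegree := by
  induction n with
  | zero => rfl
  | succ n ih => rw [Function.iterate_succ_apply', natDegree_ringEquiv_apply _ O.σ_symm_C, ih]

lemma exists_mem_Icoeff_iterate_σ_symm_eq {L : A} {l r : ℕ}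
    (hcont : O.cont L = O.LIdeal (O.M L l)) (hrl : r ≤ l) {X : A} {t : R[X]}
    (hX : X ∈ O.cont L) (hrX : r ≤ O.ord X) (ht : O.lc X = φ t) :
    ∃ s ∈ O.Icoeff L l, (⇑O.σ.symm)^[l - r] s = (⇑O.σ.symm)^[O.ord X - r] t := by
  rcases le_total (O.ord X) l with hXl | hlX
  · refine ⟨_, O.iterate_σ_mem_Icoeff hX le_rfl hXl ht, ?_⟩
    rw [show l - r = (O.ord X - r) + (l - O.ord X) by omega, Function.iterate_add_apply,
      Function.LeftInverse.iterate O.σ.symm_apply_apply _ t]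
  · refine ⟨_, O.iterate_σ_symm_mem_Icoeff hcont (O.ord X - l) hX (by omega)
      (by rwa [Nat.add_sub_cancel' hlX]), ?_⟩
    rw [← Function.iterate_add_apply]
    congr 1
    omega

lemma exists_dvd_C_mul_of_mem_cont {L : A} {l r : ℕ} (hcont : O.cont L = O.LIdeal (O.M L l))
    (hrl : r ≤ l) {f : R[X]} (hfI : f ∈ O.Icoeff L l) (hf0 : f ≠ 0)
    (hfmin : ∀ s ∈ O.Icoeff L l, s ≠ 0 → f.natDegree ≤ s.natDegree) {X : A} {t : R[X]}
    (hX : X ∈ O.cont L) (hrX : r ≤ O.ord X) (ht : O.lc X = φ t) :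
    ∃ d : R, d ≠ 0 ∧ (⇑O.σ.symm)^[l - r] f ∣ C d * (⇑O.σ.symm)^[O.ord X - r] t := by
  obtain ⟨s, hs, hst⟩ := O.exists_mem_Icoeff_iterate_σ_symm_eq hcont hrl hX hrX ht
  obtain ⟨d, hd, q, hq⟩ :=
    exists_dvd_C_mul_of_forall_natDegree_le (I := O.coeffIdeal L l) hfI hf0 hfmin hs
  exact ⟨d, hd, (⇑O.σ.symm)^[l - r] q, by
    rw [← hst, ← O.iterate_σ_symm_C_mul, hq, iterate_map_mul]⟩

lemma not_removable_pow [UniqueFactorizationMonoid R] {L : A} {r m : ℕ} {c : R}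
    {p : Fin m → R[X]} {e : Fin m → ℕ} (hF : O.Factored L r m c p e) (hLB : O.InB L)
    {f : R[X]} {u : R} {k : Fin m → ℕ} (hf : f = C u * ∏ i, p i ^ k i)
    (hdvd : ∀ (X : A) (t : R[X]), X ∈ O.cont L → r ≤ O.ord X → O.lc X = φ t →
      ∃ d : R, d ≠ 0 ∧ f ∣ C d * (⇑O.σ.symm)^[O.ord X - r] t)
    {i : Fin m} {d : ℕ} (hd : e i - k i < d) : ¬ O.Removable L (p i ^ d) := by
  rintro ⟨n, P, rfl, hPL, w, v, t, l₀, -, hw, ht, hlcL₀, heq⟩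
  obtain ⟨hordL, -, hc, hlcL, hp, hcop⟩ := hF
  have hpi : Prime (p i) := (hp i).1.prime
  have not_dvd_C : ∀ a : R, a ≠ 0 → ¬ p i ∣ C a := fun a ha h => by
    have := natDegree_le_of_dvd h (C_ne_zero.mpr ha)
    rw [natDegree_C] at this
    exact (hp i).2.ne' (Nat.le_zero.mp this)
  have hpw : ¬ p i ∣ w := fun h => hpi.not_isUnit (hw (p i) (dvd_pow_self _ (by omega)) h)
  have hl₀ : l₀ = C c * ∏ j, p j ^ e j :=
    IsFractionRing.injective R[X] (QX R) (hlcL₀.symm.trans hlcL)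
  have hl₀0 : l₀ ≠ 0 := hl₀ ▸ mul_ne_zero (C_ne_zero.mpr hc)
    (Finset.prod_ne_zero_iff.mpr fun j _ => pow_ne_zero _ (hp j).1.ne_zero)
  have hP0 : P ≠ 0 := by
    rintro rfl
    have ht0 : t = 0 := IsFractionRing.injective R[X] (QX R) (by
      rw [← ht, zero_mul, lc, O.coeff_zero, map_zero])
    rw [ht0, iterate_map_zero, zero_mul, eq_comm, mul_eq_zero, or_iff_left hl₀0] at heq
    exact hpw (heq ▸ dvd_zero _)
  have hL0 : L ≠ 0 := fun hL => hl₀0 (IsFractionRing.injective R[X] (QX R) (by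
    rw [← hlcL₀, hL, lc, O.coeff_zero, map_zero]))
  have hord : O.ord (P * L) = O.ord P + r := by rw [O.ord_mul hP0 hLB hL0, hordL]
  obtain ⟨d', hd', hdvd'⟩ := hdvd (P * L) t ⟨hPL, P, rfl⟩ (by omega) ht
  rw [hord, Nat.add_sub_cancel] at hdvd'
  have hk : p i ^ k i ∣ (⇑O.σ.symm)^[O.ord P] t := by
    refine hpi.pow_dvd_of_dvd_mul_left _ (not_dvd_C d' hd') (dvd_trans ?_ hdvd')
    rw [hf]
    exact dvd_mul_of_dvd_right (Finset.dvd_prod_of_mem _ (Finset.mem_univ i)) _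
  have hpow : p i ^ (e i + 1) ∣ (w * C c) * ∏ j, p j ^ e j := by
    rw [mul_assoc, ← hl₀, ← heq]
    refine (pow_dvd_pow _ (by omega : e i + 1 ≤ k i + d)).trans ?_
    rw [pow_add]
    exact mul_dvd_mul hk (dvd_mul_left _ v)
  refine not_pow_succ_dvd_mul_prod_pow (Finset.mem_univ i)
    (fun j _ hji d hdi hdj => hcop i j hji.symm d hdi hdj) hpi.ne_zero e ?_ hpow
  exact fun h => (hpi.dvd_or_dvd h).elim hpw (not_dvd_C c hc)

theorem desing_of_forall_dvd [UniqueFactorizationMonoid R] {L : A} {r m : ℕ} {c : R}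
    {p : Fin m → R[X]} {e : Fin m → ℕ} (hF : O.Factored L r m c p e) (hLB : O.InB L) {F : A}
    {f : R[X]} (hFc : F ∈ O.cont L) (hrF : r ≤ O.ord F) (hFlc : O.lc F = φ f)
    (hdvd : ∀ (X : A) (t : R[X]), X ∈ O.cont L → r ≤ O.ord X → O.lc X = φ t →
      ∃ d : R, d ≠ 0 ∧ (⇑O.σ.symm)^[O.ord F - r] f ∣ C d * (⇑O.σ.symm)^[O.ord X - r] t) :
    O.Desing L r m c p e F := by
  have ⟨hordL, _, hc, hlcL, hp, _⟩ := hF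
  obtain ⟨u, k, hke, hf⟩ : ∃ (u : R) (k : Fin m → ℕ), (∀ i, k i ≤ e i) ∧
      (⇑O.σ.symm)^[O.ord F - r] f = C u * ∏ i, p i ^ k i := by
    obtain ⟨d, hd, hfL⟩ := hdvd L _ (O.self_mem_cont hLB) hordL.ge hlcL
    rw [hordL, Nat.sub_self, Function.iterate_zero_apply, ← mul_assoc, ← C_mul] at hfL
    exact exists_eq_C_mul_prod_pow_of_dvd (fun i => (hp i).1.prime) e _ (mul_ne_zero hd hc) hfL
  refine ⟨hFc, hrF, u, c, fun i => e i - k i, f, _, hc, fun i => Nat.sub_le _ _, hFlc, hlcL, ?_,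
    fun i d hd => O.not_removable_pow hF hLB hf hdvd hd⟩
  have hsplit : ∏ i, p i ^ e i = (∏ i, p i ^ k i) * ∏ i, p i ^ (e i - k i) := by
    rw [← Finset.prod_mul_distrib]
    exact Finset.prod_congr rfl fun i _ => by rw [← pow_add, Nat.add_sub_cancel' (hke i)]
  rw [hf, hsplit]
  ring

lemma dvd_of_iterate_σ_symm_eq_C_mul {L : A} {l r : ℕ} (hcont : O.cont L = O.LIdeal (O.M L l))
    (hrl : r ≤ l) {f g : R[X]} (hf0 : f ≠ 0)
    (hfred : ∀ s ∈ O.Icoeff L l, s.natDegree = f.natDegree → ∃ u : R, s = C u * f)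
    {cF : R} (hcF : (⇑O.σ.symm)^[l - r] f = C cF * g) {T : A} {t : R[X]} {cT : R}
    (hT : T ∈ O.cont L) (hrT : r ≤ O.ord T) (ht : O.lc T = φ t)
    (htg : (⇑O.σ.symm)^[O.ord T - r] t = C cT * g) : cF ∣ cT := by
  rcases eq_or_ne cT 0 with rfl | hcT
  · exact dvd_zero cF
  have hFg : C cF * g ≠ 0 := hcF ▸ O.iterate_σ_symm_eq_zero.not.mpr hf0
  obtain ⟨s, hs, hst⟩ := O.exists_mem_Icoeff_iterate_σ_symm_eq hcont hrl hT hrT ht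
  rw [htg] at hst
  have hdeg : s.natDegree = f.natDegree := by
    rw [← O.natDegree_iterate_σ_symm (l - r) s, hst, ← O.natDegree_iterate_σ_symm (l - r) f, hcF,
      natDegree_C_mul hcT, natDegree_C_mul (C_ne_zero.mp (left_ne_zero_of_mul hFg))]
  obtain ⟨u, rfl⟩ := hfred s hs hdeg
  rw [O.iterate_σ_symm_C_mul, hcF, ← mul_assoc, ← C_mul] at hst
  exact ⟨u, by
    rw [mul_comm]
    exact C_injective (mul_right_cancel₀ (right_ne_zero_of_mul hFg) hst).symm⟩

end OreAlg

theorem completely_desingularized_general {R : Type} [CommRing R] [IsDomain R]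
    [IsPrincipalIdealRing R] {A : Type} [Ring A] (O : OreAlg R A)
    (L : A) (hLB : O.InB L)
    (r m : ℕ) (c : R) (p : Fin m → Polynomial R) (e : Fin m → ℕ)
    (hF : O.Factored L r m c p e)
    (l : ℕ) (hlr : r ≤ l) (hcont : O.cont L = O.LIdeal (O.M L l))
    (g : Polynomial R)
    (hgall : ∀ (T : A) (t : Polynomial R), O.Desing L r m c p e T →
      O.lc T = algebraMap (Polynomial R) (QX R) t →
      ∃ cT : R, (⇑O.σ.symm)^[O.ord T - r] t = C cT * g)
    (f : Polynomial R) (hfI : f ∈ O.Icoeff L l) (hf0 : f ≠ 0)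
    (hfmin : ∀ s ∈ O.Icoeff L l, s ≠ 0 → f.natDegree ≤ s.natDegree)
    (hfred : ∀ s ∈ O.Icoeff L l, s.natDegree = f.natDegree → ∃ u : R, s = C u * f)
    (F : A) (hFc : F ∈ O.cont L) (hFord : O.ord F = l)
    (hFlc : O.lc F = algebraMap (Polynomial R) (QX R) f) :
    O.Desing L r m c p e F ∧
    ∃ cF : R, (⇑O.σ.symm)^[l - r] f = C cF * g ∧
      ∀ (T : A) (t : Polynomial R) (cT : R), O.Desing L r m c p e T →
        O.lc T = algebraMap (Polynomial R) (QX R) t →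
        (⇑O.σ.symm)^[O.ord T - r] t = C cT * g → cF ∣ cT := by
  have hDes : O.Desing L r m c p e F := by
    refine O.desing_of_forall_dvd hF hLB hFc (hFord ▸ hlr) hFlc fun X t hX hrX ht => ?_
    rw [hFord]
    exact O.exists_dvd_C_mul_of_mem_cont hcont hlr hfI hf0 hfmin hX hrX ht
  obtain ⟨cF, hcF⟩ := hgall F f hDes hFlc
  rw [hFord] at hcF
  exact ⟨hDes, cF, hcF, fun T t cT hT ht htg =>
    O.dvd_of_iterate_σ_symm_eq_C_mul hcont hlr hf0 hfred hcF hT.1 hT.2.1 ht htg⟩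

/-- suppose `cont(L) = R[x][∂]·M_ℓ`.  Let `f` be the (unique)
minimal-degree element of a reduced Gröbner basis of `I_ℓ` — encoded by: `f ∈ I_ℓ`
is nonzero of minimal degree, and every element of `I_ℓ` of the same degree is an
`R`-multiple of `f` (reduces to zero by `f`).  Then any `F ∈ cont(L)` of order `ℓ`
with `lc_∂(F) = f` is a completely desingularized operator for `L`: `F` is
desingularized and its constant `c_F` (content of `f`, via `σ^{-(ℓ-r)}(f) = c_F·g`)
divides the constant of every desingularized operator for `L`. -/
theorem completely_desingularized {R : Type} [CommRing R] [IsDomain R]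
    [IsPrincipalIdealRing R] {A : Type} [Ring A] (O : OreAlg R A)
    (L : A) (hL : L ≠ 0) (hLB : O.InB L)
    (r m : ℕ) (c : R) (p : Fin m → Polynomial R) (e : Fin m → ℕ)
    (hF : O.Factored L r m c p e)
    (l : ℕ) (hlr : r ≤ l) (hcont : O.cont L = O.LIdeal (O.M L l))
    (g : Polynomial R) (hg : g.IsPrimitive)
    (hgall : ∀ (T : A) (t : Polynomial R), O.Desing L r m c p e T →
      O.lc T = algebraMap (Polynomial R) (QX R) t →
      ∃ cT : R, (⇑O.σ.symm)^[O.ord T - r] t = C cT * g)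
    (f : Polynomial R) (hfI : f ∈ O.Icoeff L l) (hf0 : f ≠ 0)
    (hfmin : ∀ s ∈ O.Icoeff L l, s ≠ 0 → f.natDegree ≤ s.natDegree)
    (hfred : ∀ s ∈ O.Icoeff L l, s.natDegree = f.natDegree → ∃ u : R, s = C u * f)
    (F : A) (hFc : F ∈ O.cont L) (hFord : O.ord F = l)
    (hFlc : O.lc F = algebraMap (Polynomial R) (QX R) f) :
    O.Desing L r m c p e F ∧
    ∃ cF : R, (⇑O.σ.symm)^[l - r] f = C cF * g ∧
      ∀ (T : A) (t : Polynomial R) (cT : R), O.Desing L r m c p e T →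
        O.lc T = algebraMap (Polynomial R) (QX R) t →
        (⇑O.σ.symm)^[O.ord T - r] t = C cT * g → cF ∣ cT :=
  completely_desingularized_general O L hLB r m c p e hF l hlr hcont g hgall f hfI hf0 hfmin hfred F
    hFc hFord hFlc
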